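/- arXiv:2504.02243 — 2 statements merged into one kernel-verified Lean document; each statement's English description precedes it below -/
import Mathlib

section
/- Let 0 < ρ < 1 be a real number. The binomial series f(z) = Σ_{n=0}^∞ (1/(n^{1/ρ}·log n)^n) · z^{\underline{n}} (with the n = 0 and n = 1 terms interpreted as, say, 0) converges uniformly on every compact subset of ℂ, and the entire function f so defined has order of growth ρ(f) = ρ and minimum type, i.e. τ(f) = 0. -/
open Filter Finset

/-- The falling factorial `z(z-1)⋯(z-n+1)`. -/
noncomputable def ff (z : ℂ) (n : ℕ) : ℂ := ∏ k ∈ Finset.range n, (z - (k : ℂ))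

/-- The maximum modulus `M(r,f) = max_{|z| ≤ r} |f(z)|`. -/
noncomputable def maxMod (f : ℂ → ℂ) (r : ℝ) : ℝ :=
  sSup ((fun z => ‖f z‖) '' Metric.closedBall (0 : ℂ) r)

/-- The order of growth `ρ(f) = limsup_{r → ∞} log log M(r,f) / log r`. -/
noncomputable def growthOrder (f : ℂ → ℂ) : ℝ :=
  Filter.limsup (fun r : ℝ => Real.log (Real.log (maxMod f r)) / Real.log r) Filter.atTop

/-- The type `τ(f) = limsup_{r → ∞} log M(r,f) / r^ρ`, as an extended real number. -/
noncomputable def growthTypeE (f : ℂ → ℂ) (ρ : ℝ) : EReal :=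
  Filter.limsup (fun r : ℝ => ((Real.log (maxMod f r) / r ^ ρ : ℝ) : EReal)) Filter.atTop

/-- `χ((a_n)) = limsup_{n → ∞} (n log n)/(-log |a_n|)`. -/
noncomputable def chi (a : ℕ → ℂ) : ℝ :=
  Filter.limsup (fun n : ℕ => (n : ℝ) * Real.log n / (-Real.log ‖a n‖)) Filter.atTop

namespace MinType
open Topology
variable {ρ : ℝ}







/-- real coefficient -/
noncomputable def aR (ρ : ℝ) (n : ℕ) : ℝ :=
  if n < 2 then 0 else 1 / ((n : ℝ) ^ (1 / ρ) * Real.log n) ^ n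

/-- the denominator base -/
noncomputable def cc (ρ : ℝ) (n : ℕ) : ℝ := (n : ℝ) ^ (1 / ρ) * Real.log n

lemma cc_pos (hρ0 : 0 < ρ) {n : ℕ} (hn : 2 ≤ n) : 0 < cc ρ n := by
  have h2 : (2:ℝ) ≤ (n:ℝ) := by exact_mod_cast hn
  have hn1 : (1:ℝ) < (n:ℝ) := by linarith
  exact mul_pos (Real.rpow_pos_of_pos (by linarith) _) (Real.log_pos hn1)

lemma aR_nonneg (hρ0 : 0 < ρ) (n : ℕ) : 0 ≤ aR ρ n := by
  unfold aR
  split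
  · exact le_rfl
  · exact le_of_lt (div_pos one_pos (pow_pos (cc_pos hρ0 (Nat.not_lt.mp ‹_›)) _))

lemma aR_eq_of_ge {n : ℕ} (hn : 2 ≤ n) : aR ρ n = 1 / (cc ρ n) ^ n := by
  simp [aR, cc, Nat.not_lt.mpr hn]



lemma norm_ff_le (z : ℂ) (n : ℕ) : ‖ff z n‖ ≤ (‖z‖ + n) ^ n := by
  calc ‖ff z n‖ ≤ ∏ k ∈ Finset.range n, ‖z - (k:ℂ)‖ := norm_prod_le _ _
  _ ≤ ∏ k ∈ Finset.range n, (‖z‖ + n) := by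
      apply Finset.prod_le_prod (fun k _ => norm_nonneg _)
      intro k hk
      have h1 : ‖z - (k:ℂ)‖ ≤ ‖z‖ + ‖(k:ℂ)‖ := norm_sub_le _ _
      have h2 : ‖(k:ℂ)‖ = (k:ℝ) := by simp
      have hk' : (k:ℝ) ≤ (n:ℝ) := by exact_mod_cast (Finset.mem_range.mp hk).le
      rw [h2] at h1; linarith
  _ = (‖z‖ + n) ^ n := by rw [Finset.prod_const, Finset.card_range]

lemma ff_differentiable (n : ℕ) : Differentiable ℂ (fun z => ff z n) := by
  unfold ff
  apply Differentiable.fun_finsetProd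
  intro k _
  exact differentiable_id.sub (differentiable_const _)



lemma tendsto_ratio (hρ0 : 0 < ρ) (hρ1 : ρ < 1) (R : ℝ) :
    Tendsto (fun n : ℕ => (R + n) / cc ρ n) atTop (𝓝 0) := by
  set q := 1 / ρ with hq
  have hq1 : 1 < q := (one_lt_div hρ0).mpr hρ1
  have hmain : Tendsto (fun n : ℕ => R * (n:ℝ) ^ (-q) + (n:ℝ) ^ (1 - q)) atTop (𝓝 0) := by
    have h1 : Tendsto (fun n : ℕ => (n:ℝ) ^ (-q)) atTop (𝓝 0) :=
      (tendsto_rpow_neg_atTop (by linarith)).comp tendsto_natCast_atTop_atTop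
    have h2 : Tendsto (fun n : ℕ => (n:ℝ) ^ (1 - q)) atTop (𝓝 0) := by
      have := (tendsto_rpow_neg_atTop (y := q - 1) (by linarith)).comp
        (tendsto_natCast_atTop_atTop (R := ℝ))
      simpa [neg_sub, Function.comp_def] using this
    simpa using (h1.const_mul R).add h2
  apply squeeze_zero_norm' _ hmain
  filter_upwards [eventually_ge_atTop 3, eventually_ge_atTop (⌈|R|⌉₊ + 1)] with n h3 hR
  have hn3 : (3:ℝ) ≤ (n:ℝ) := by exact_mod_cast h3
  have hnpos : (0:ℝ) < n := by linarith
  have hlog1 : 1 ≤ Real.log n := by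
    rw [Real.le_log_iff_exp_le hnpos]
    exact (Real.exp_one_lt_d9.le.trans (by norm_num)).trans hn3
  have hrpow_pos : (0:ℝ) < (n:ℝ) ^ q := Real.rpow_pos_of_pos hnpos _
  have hcc : (n:ℝ) ^ q ≤ cc ρ n := by
    have : (n:ℝ) ^ q * 1 ≤ (n:ℝ) ^ q * Real.log n :=
      mul_le_mul_of_nonneg_left hlog1 hrpow_pos.le
    simpa [cc, hq] using this
  have hRn : |R| ≤ (n:ℝ) := by
    have : (⌈|R|⌉₊ : ℝ) ≤ n := by exact_mod_cast Nat.le_of_succ_le hR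
    exact (Nat.le_ceil _).trans this
  have hnum : 0 ≤ R + n := by
    have := neg_abs_le R; linarith
  have hccpos : 0 < cc ρ n := lt_of_lt_of_le hrpow_pos hcc
  rw [Real.norm_of_nonneg (div_nonneg hnum hccpos.le)]
  calc (R + n) / cc ρ n ≤ (R + n) / (n:ℝ) ^ q := by
        exact div_le_div_of_nonneg_left hnum hrpow_pos hcc
  _ = R * (n:ℝ) ^ (-q) + (n:ℝ) ^ (1 - q) := by
        rw [Real.rpow_neg hnpos.le, Real.rpow_sub hnpos, Real.rpow_one]
        field_simp


noncomputable def u (ρ R : ℝ) (n : ℕ) : ℝ := aR ρ n * (R + n) ^ n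

lemma norm_term_le (hρ0 : 0 < ρ) {R : ℝ} {z : ℂ} (hz : ‖z‖ ≤ R) (n : ℕ) :
    ‖(aR ρ n : ℂ) * ff z n‖ ≤ u ρ R n := by
  rw [norm_mul, Complex.norm_real, Real.norm_of_nonneg (aR_nonneg hρ0 n)]
  apply mul_le_mul_of_nonneg_left _ (aR_nonneg hρ0 n)
  refine (norm_ff_le z n).trans ?_
  exact pow_le_pow_left₀ (by positivity) (by linarith) n

lemma u_nonneg (hρ0 : 0 < ρ) {R : ℝ} (hR : 0 ≤ R) (n : ℕ) : 0 ≤ u ρ R n :=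
  mul_nonneg (aR_nonneg hρ0 n) (by positivity)

lemma summable_u (hρ0 : 0 < ρ) (hρ1 : ρ < 1) {R : ℝ} (hR : 0 ≤ R) : Summable (u ρ R) := by
  apply Summable.of_norm_bounded_eventually_nat (g := fun n => (1/2:ℝ)^n)
    (summable_geometric_of_lt_one (by norm_num) (by norm_num))
  have h1 : ∀ᶠ n : ℕ in atTop, (R + n) / cc ρ n < 1/2 :=
    (tendsto_ratio hρ0 hρ1 R).eventually (gt_mem_nhds (by norm_num))
  filter_upwards [h1, eventually_ge_atTop 2] with n hlt h2
  have hcc := cc_pos hρ0 h2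
  have hratio_nonneg : 0 ≤ (R + n) / cc ρ n := div_nonneg (by positivity) hcc.le
  have : u ρ R n = ((R + n) / cc ρ n) ^ n := by
    rw [u, aR_eq_of_ge h2, div_pow, one_div, inv_mul_eq_div]
  rw [Real.norm_of_nonneg (u_nonneg hρ0 hR n), this]
  exact pow_le_pow_left₀ hratio_nonneg hlt.le n

/-- The entire function. -/
noncomputable def fF (ρ : ℝ) (z : ℂ) : ℂ := ∑' n, (aR ρ n : ℂ) * ff z n

lemma summable_norm_term (hρ0 : 0 < ρ) (hρ1 : ρ < 1) (z : ℂ) :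
    Summable (fun n => ‖(aR ρ n : ℂ) * ff z n‖) := by
  apply Summable.of_nonneg_of_le (fun n => norm_nonneg _)
    (fun n => norm_term_le hρ0 (le_refl ‖z‖) n)
  exact summable_u hρ0 hρ1 (norm_nonneg z)

lemma tuo_ball (hρ0 : 0 < ρ) (hρ1 : ρ < 1) {R : ℝ} (hR : 0 ≤ R) :
    TendstoUniformlyOn (fun N z => ∑ n ∈ Finset.range N, (aR ρ n : ℂ) * ff z n) (fF ρ)
      atTop (Metric.closedBall 0 R) := by
  apply tendstoUniformlyOn_tsum_nat (summable_u hρ0 hρ1 hR)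
  intro n z hz
  exact norm_term_le hρ0 (mem_closedBall_zero_iff.mp hz) n

lemma tuo_compact (hρ0 : 0 < ρ) (hρ1 : ρ < 1) {K : Set ℂ} (hK : IsCompact K) :
    TendstoUniformlyOn (fun N z => ∑ n ∈ Finset.range N, (aR ρ n : ℂ) * ff z n) (fF ρ)
      atTop K := by
  obtain ⟨R, hRK⟩ := hK.isBounded.subset_closedBall 0
  have hsub : K ⊆ Metric.closedBall 0 (max R 0) :=
    hRK.trans (Metric.closedBall_subset_closedBall (le_max_left _ _))
  exact (tuo_ball hρ0 hρ1 (le_max_right R 0)).mono hsub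

lemma fF_differentiable (hρ0 : 0 < ρ) (hρ1 : ρ < 1) : Differentiable ℂ (fF ρ) := by
  rw [← differentiableOn_univ]
  apply TendstoLocallyUniformlyOn.differentiableOn
    (F := fun N z => ∑ n ∈ Finset.range N, (aR ρ n : ℂ) * ff z n) (φ := atTop)
  · rw [tendstoLocallyUniformlyOn_iff_forall_isCompact isOpen_univ]
    intro K _ hK
    exact tuo_compact hρ0 hρ1 hK
  · filter_upwards with N
    apply Differentiable.differentiableOn
    apply Differentiable.fun_sum
    intro n _
    exact (differentiable_const _).mul (ff_differentiable n)
  · exact isOpen_univ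

lemma fF_continuous (hρ0 : 0 < ρ) (hρ1 : ρ < 1) : Continuous (fF ρ) :=
  (fF_differentiable hρ0 hρ1).continuous




lemma le_maxMod {f : ℂ → ℂ} (hf : Continuous f) {z : ℂ} {r : ℝ} (hz : ‖z‖ ≤ r) :
    ‖f z‖ ≤ maxMod f r := by
  apply le_csSup
  · exact ((isCompact_closedBall 0 r).image (hf.norm)).bddAbove
  · exact Set.mem_image_of_mem _ (mem_closedBall_zero_iff.mpr hz)

lemma maxMod_le {f : ℂ → ℂ} {r C : ℝ} (hC : 0 ≤ C)
    (h : ∀ z : ℂ, ‖z‖ ≤ r → ‖f z‖ ≤ C) : maxMod f r ≤ C := by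
  apply Real.sSup_le _ hC
  rintro x ⟨z, hz, rfl⟩
  exact h z (mem_closedBall_zero_iff.mp hz)

/-- real terms of the series at a natural number point -/
noncomputable def gg (ρ : ℝ) (n : ℕ) (k : ℕ) : ℝ :=
  aR ρ k * ∏ i ∈ Finset.range k, ((n : ℝ) - i)

lemma prod_nonneg_of_le {n k : ℕ} (hk : k ≤ n) :
    0 ≤ ∏ i ∈ Finset.range k, ((n : ℝ) - i) := by
  apply Finset.prod_nonneg
  intro i hi
  have : (i:ℝ) < k := by exact_mod_cast Finset.mem_range.mp hi
  have : (k:ℝ) ≤ n := by exact_mod_cast hk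
  linarith

lemma prod_eq_zero_of_gt {n k : ℕ} (hk : n < k) :
    ∏ i ∈ Finset.range k, ((n : ℝ) - i) = 0 := by
  apply Finset.prod_eq_zero (Finset.mem_range.mpr hk)
  simp

lemma gg_nonneg (hρ0 : 0 < ρ) (n k : ℕ) : 0 ≤ gg ρ n k := by
  rcases le_or_gt k n with h | h
  · exact mul_nonneg (aR_nonneg hρ0 k) (prod_nonneg_of_le h)
  · simp [gg, prod_eq_zero_of_gt h]

lemma gg_le_u (hρ0 : 0 < ρ) (n k : ℕ) : gg ρ n k ≤ u ρ (n:ℝ) k := by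
  rcases le_or_gt k n with h | h
  · apply mul_le_mul_of_nonneg_left _ (aR_nonneg hρ0 k)
    calc ∏ i ∈ Finset.range k, ((n : ℝ) - i) ≤ ∏ i ∈ Finset.range k, ((n:ℝ) + k) := by
          apply Finset.prod_le_prod
          · intro i hi
            have h1 : (i:ℝ) < k := by exact_mod_cast Finset.mem_range.mp hi
            have h2 : (k:ℝ) ≤ n := by exact_mod_cast h
            linarith
          · intro i hi
            have h1 : (i:ℝ) ≥ 0 := Nat.cast_nonneg i
            have h2 : (0:ℝ) ≤ k := Nat.cast_nonneg k
            linarith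
    _ = ((n:ℝ) + k) ^ k := by rw [Finset.prod_const, Finset.card_range]
  · rw [gg, prod_eq_zero_of_gt h, mul_zero]
    exact u_nonneg hρ0 (Nat.cast_nonneg n) k

lemma summable_gg (hρ0 : 0 < ρ) (hρ1 : ρ < 1) (n : ℕ) : Summable (gg ρ n) :=
  Summable.of_nonneg_of_le (gg_nonneg hρ0 n) (gg_le_u hρ0 n)
    (summable_u hρ0 hρ1 (Nat.cast_nonneg n))

lemma fF_at_nat (n : ℕ) : fF ρ (n : ℂ) = ((∑' k, gg ρ n k : ℝ) : ℂ) := by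
  rw [fF, Complex.ofReal_tsum]
  congr 1
  funext k
  rw [gg, Complex.ofReal_mul]
  congr 1
  rw [ff, Complex.ofReal_prod]
  congr 1
  funext i
  push_cast
  ring

lemma gg_le_norm_fF (hρ0 : 0 < ρ) (hρ1 : ρ < 1) (n k : ℕ) :
    gg ρ n k ≤ ‖fF ρ (n : ℂ)‖ := by
  rw [fF_at_nat, Complex.norm_real, Real.norm_of_nonneg
    (tsum_nonneg (gg_nonneg hρ0 n))]
  exact Summable.le_tsum (summable_gg hρ0 hρ1 n) k (fun j _ => gg_nonneg hρ0 n j)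



lemma lower_nat (hρ0 : 0 < ρ) (hρ1 : ρ < 1) : ∀ᶠ n : ℕ in atTop,
    (n:ℝ)^ρ / (Real.log n)^(2*ρ) ≤ Real.log ‖fF ρ (n:ℂ)‖ ∧
    Real.exp 2 ≤ ‖fF ρ (n:ℂ)‖ := by
  set q := 1/ρ with hq
  have hq1 : 1 < q := (one_lt_div hρ0).mpr hρ1
  -- eventual facts on ℝ
  have E1 : ∀ᶠ y : ℝ in atTop, Real.log y ^ (2*ρ) ≤ y ^ (ρ/2) := by
    have h := (isLittleO_log_rpow_rpow_atTop (2*ρ) (by linarith : (0:ℝ) < ρ/2)).def one_pos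
    filter_upwards [h, eventually_ge_atTop 1] with y hy hy1
    have h1 : (0:ℝ) ≤ Real.log y := Real.log_nonneg hy1
    have h2 : (0:ℝ) ≤ y ^ (ρ/2) := Real.rpow_nonneg (by linarith) _
    rwa [Real.norm_of_nonneg (Real.rpow_nonneg h1 _), Real.norm_of_nonneg h2, one_mul] at hy
  have E2 : ∀ᶠ y : ℝ in atTop, y^ρ + 3 ≤ y/2 := by
    have h := (tendsto_rpow_neg_atTop (by linarith : (0:ℝ) < 1 - ρ)).eventually
      (ge_mem_nhds (by norm_num : (0:ℝ) < 1/4))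
    filter_upwards [h, eventually_ge_atTop 12] with y hy hy1
    have hypos : (0:ℝ) < y := by linarith
    have : y ^ ρ = y ^ (-(1-ρ)) * y := by
      rw [← Real.rpow_add_one (ne_of_gt hypos)]; ring_nf
    rw [this]
    have h4 : y ^ (-(1-ρ)) * y ≤ (1/4) * y := by
      apply mul_le_mul_of_nonneg_right hy hypos.le
    linarith
  have E3 : ∀ᶠ y : ℝ in atTop, 2 * 4^q * Real.exp 1 ≤ Real.log y :=
    Real.tendsto_log_atTop.eventually (eventually_ge_atTop _)
  filter_upwards [eventually_ge_atTop 3,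
    (tendsto_natCast_atTop_atTop (R := ℝ)).eventually E1,
    (tendsto_natCast_atTop_atTop (R := ℝ)).eventually E2,
    (tendsto_natCast_atTop_atTop (R := ℝ)).eventually E3] with n h3 e1 e2 e3
  have hn3 : (3:ℝ) ≤ (n:ℝ) := by exact_mod_cast h3
  have hnpos : (0:ℝ) < n := by linarith
  have hlog1 : 1 ≤ Real.log n := by
    rw [Real.le_log_iff_exp_le hnpos]
    exact (Real.exp_one_lt_d9.le.trans (by norm_num)).trans hn3
  have hlogpos : (0:ℝ) < Real.log n := by linarith
  have hlogpow_pos : (0:ℝ) < Real.log n ^ (2*ρ) := Real.rpow_pos_of_pos hlogpos _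
  set x := (n:ℝ)^ρ / Real.log n ^ (2*ρ) with hxdef
  have hxpos : 0 < x := div_pos (Real.rpow_pos_of_pos hnpos _) hlogpow_pos
  have hx1 : 1 ≤ x := by
    rw [hxdef, le_div_iff₀ hlogpow_pos, one_mul]
    calc Real.log n ^ (2*ρ) ≤ (n:ℝ) ^ (ρ/2) := e1
    _ ≤ (n:ℝ)^ρ := Real.rpow_le_rpow_of_exponent_le (by linarith) (by linarith)
  have hxnρ : x ≤ (n:ℝ)^ρ := by
    rw [hxdef, div_le_iff₀ hlogpow_pos]
    nth_rewrite 1 [← mul_one ((n:ℝ)^ρ)]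
    apply mul_le_mul_of_nonneg_left _ (Real.rpow_nonneg hnpos.le _)
    exact Real.one_le_rpow hlog1 (by linarith)
  set k := ⌈x⌉₊ + 2 with hkdef
  have hk2 : 2 ≤ k := by omega
  have hkx : x ≤ (k:ℝ) := by
    rw [hkdef]
    push_cast
    have := Nat.le_ceil x
    linarith
  have hkx3 : (k:ℝ) ≤ x + 3 := by
    rw [hkdef]
    push_cast
    have := Nat.ceil_lt_add_one hxpos.le
    linarith
  have hkhalf : (k:ℝ) ≤ (n:ℝ)/2 := by
    calc (k:ℝ) ≤ x + 3 := hkx3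
    _ ≤ (n:ℝ)^ρ + 3 := by linarith
    _ ≤ (n:ℝ)/2 := e2
  have hkn : k ≤ n := by
    have : (k:ℝ) ≤ (n:ℝ) := by linarith
    exact_mod_cast this
  have hkpos : (0:ℝ) < k := by positivity
  -- cc k bound
  have hcck_pos : 0 < cc ρ k := cc_pos hρ0 hk2
  have h4q : (0:ℝ) < 4 ^ q := Real.rpow_pos_of_pos (by norm_num) _
  have hxq : x ^ q = (n:ℝ) / Real.log n ^ (2:ℝ) := by
    rw [hxdef, Real.div_rpow (Real.rpow_nonneg hnpos.le _) (Real.rpow_nonneg hlogpos.le _),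
      ← Real.rpow_mul hnpos.le, ← Real.rpow_mul hlogpos.le]
    rw [show ρ * q = 1 by rw [hq]; field_simp, show 2 * ρ * q = 2 by rw [hq]; field_simp]
    rw [Real.rpow_one]
  have hCC : cc ρ k ≤ 4 ^ q * (n:ℝ) / Real.log n := by
    have hk4x : (k:ℝ) ≤ 4 * x := by linarith
    have hkq : (k:ℝ) ^ q ≤ (4*x) ^ q :=
      Real.rpow_le_rpow hkpos.le hk4x (by linarith)
    have h4x : (4*x) ^ q = 4 ^ q * x ^ q := Real.mul_rpow (by norm_num) hxpos.le
    have hlogk : Real.log k ≤ Real.log n := Real.log_le_log hkpos (by exact_mod_cast hkn)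
    have hlogk0 : 0 ≤ Real.log k := by
      apply Real.log_nonneg; exact_mod_cast Nat.one_le_iff_ne_zero.mpr (by omega)
    calc cc ρ k = (k:ℝ) ^ q * Real.log k := rfl
    _ ≤ (4 ^ q * x ^ q) * Real.log n := by
        apply mul_le_mul (by rw [← h4x]; exact hkq) hlogk hlogk0
        positivity
    _ = 4 ^ q * ((n:ℝ) / Real.log n ^ (2:ℝ)) * Real.log n := by rw [hxq]
    _ = 4 ^ q * (n:ℝ) / Real.log n := by
        rw [show Real.log ↑n ^ (2:ℝ) = Real.log n * Real.log n by
          rw [show (2:ℝ) = ((2:ℕ):ℝ) by norm_num, Real.rpow_natCast]; ring]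
        field_simp
  have hCCpos : (0:ℝ) < 4 ^ q * (n:ℝ) / Real.log n := by positivity
  -- the base of the power is at least e
  have hbase : Real.exp 1 ≤ ((n:ℝ)/2) / cc ρ k := by
    have h1 : ((n:ℝ)/2) / (4 ^ q * (n:ℝ) / Real.log n) ≤ ((n:ℝ)/2) / cc ρ k :=
      div_le_div_of_nonneg_left (by linarith) hcck_pos hCC
    have h2 : ((n:ℝ)/2) / (4 ^ q * (n:ℝ) / Real.log n) = Real.log n / (2 * 4 ^ q) := by
      field_simp
    rw [h2] at h1
    refine le_trans ?_ h1
    rw [le_div_iff₀ (by positivity)]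
    linarith [e3]
  -- lower bound for gg
  have hprod : ((n:ℝ)/2) ^ k ≤ ∏ i ∈ Finset.range k, ((n : ℝ) - i) := by
    rw [show ((n:ℝ)/2) ^ k = ∏ _i ∈ Finset.range k, ((n:ℝ)/2) by
      rw [Finset.prod_const, Finset.card_range]]
    apply Finset.prod_le_prod (fun _ _ => by linarith)
    intro i hi
    have h1 : (i:ℝ) < k := by exact_mod_cast Finset.mem_range.mp hi
    linarith
  have hgg : (((n:ℝ)/2) / cc ρ k) ^ k ≤ gg ρ n k := by
    rw [gg, aR_eq_of_ge hk2, div_pow, one_div, inv_mul_eq_div]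
    exact (div_le_div_iff_of_pos_right (pow_pos hcck_pos k)).mpr hprod
  have hexp : Real.exp (k:ℝ) ≤ gg ρ n k := by
    have h1 : Real.exp 1 ^ k ≤ (((n:ℝ)/2)/cc ρ k)^k :=
      pow_le_pow_left₀ (Real.exp_pos 1).le hbase k
    have h2 : Real.exp (k:ℝ) = Real.exp 1 ^ k := by
      rw [← Real.exp_nat_mul, mul_one]
    rw [h2]
    exact h1.trans hgg
  have hnorm : Real.exp (k:ℝ) ≤ ‖fF ρ (n:ℂ)‖ := hexp.trans (gg_le_norm_fF hρ0 hρ1 n k)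
  have hpos : 0 < ‖fF ρ (n:ℂ)‖ := lt_of_lt_of_le (Real.exp_pos _) hnorm
  constructor
  · have hklog : (k:ℝ) ≤ Real.log ‖fF ρ (n:ℂ)‖ := (Real.le_log_iff_exp_le hpos).mpr hnorm
    calc (n:ℝ)^ρ / Real.log n ^ (2*ρ) = x := rfl
    _ ≤ (k:ℝ) := hkx
    _ ≤ _ := hklog
  · have h2k : Real.exp 2 ≤ Real.exp (k:ℝ) := Real.exp_le_exp.mpr (by exact_mod_cast hk2)
    exact h2k.trans hnorm

lemma lower_real (hρ0 : 0 < ρ) (hρ1 : ρ < 1) : ∀ᶠ r : ℝ in atTop,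
    r^ρ / (2 * Real.log r ^ (2*ρ)) ≤ Real.log (maxMod (fF ρ) r) ∧
    2 ≤ Real.log (maxMod (fF ρ) r) ∧ Real.exp 2 ≤ maxMod (fF ρ) r := by
  filter_upwards [(tendsto_nat_floor_atTop (α := ℝ)).eventually (lower_nat hρ0 hρ1),
    eventually_ge_atTop 2] with r hfl hr2
  set n := ⌊r⌋₊ with hndef
  have hrpos : (0:ℝ) < r := by linarith
  have hn : (n:ℝ) ≤ r := Nat.floor_le hrpos.le
  have hrn : r - 1 < (n:ℝ) := by
    have := Nat.lt_floor_add_one r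
    push_cast at this ⊢
    linarith
  have hnhalf : r/2 ≤ (n:ℝ) := by linarith
  have hn2 : 2 ≤ n := Nat.le_floor (by exact_mod_cast hr2)
  have hn2' : (2:ℝ) ≤ (n:ℝ) := by exact_mod_cast hn2
  have hmax : ‖fF ρ (n:ℂ)‖ ≤ maxMod (fF ρ) r := by
    apply le_maxMod (fF_continuous hρ0 hρ1)
    rw [Complex.norm_natCast]
    exact hn
  have hfpos : 0 < ‖fF ρ (n:ℂ)‖ := lt_of_lt_of_le (Real.exp_pos _) hfl.2
  have hlogle : Real.log ‖fF ρ (n:ℂ)‖ ≤ Real.log (maxMod (fF ρ) r) :=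
    Real.log_le_log hfpos hmax
  have hlognpos : 0 < Real.log n := Real.log_pos (by linarith)
  have hlogrpos : 0 < Real.log r := Real.log_pos (by linarith)
  constructor
  · have key : r^ρ / (2 * Real.log r ^ (2*ρ)) ≤ (n:ℝ)^ρ / Real.log n ^ (2*ρ) := by
      have hnum : r^ρ/2 ≤ (n:ℝ)^ρ := by
        have h1 : (r/2)^ρ ≤ (n:ℝ)^ρ := Real.rpow_le_rpow (by linarith) hnhalf hρ0.le
        have h2 : (r/2)^ρ = r^ρ / 2^ρ := Real.div_rpow hrpos.le (by norm_num : (0:ℝ) ≤ 2) ρ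
        have h3 : (2:ℝ)^ρ ≤ 2 := by
          calc (2:ℝ)^ρ ≤ (2:ℝ)^(1:ℝ) :=
            Real.rpow_le_rpow_of_exponent_le one_le_two hρ1.le
          _ = 2 := Real.rpow_one 2
        have h4 : r^ρ/2 ≤ r^ρ/2^ρ := by
          apply div_le_div_of_nonneg_left (Real.rpow_nonneg hrpos.le ρ)
            (by positivity) h3
        linarith [h2 ▸ h1]
      have hden : Real.log n ^ (2*ρ) ≤ Real.log r ^ (2*ρ) :=
        Real.rpow_le_rpow hlognpos.le (Real.log_le_log (by positivity) hn) (by positivity)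
      calc r^ρ / (2 * Real.log r ^ (2*ρ)) = (r^ρ/2) / Real.log r ^ (2*ρ) := by
            rw [div_div]
      _ ≤ (n:ℝ)^ρ / Real.log n ^ (2*ρ) :=
          div_le_div₀ (Real.rpow_nonneg (by positivity) ρ) hnum
            (Real.rpow_pos_of_pos hlognpos _) hden
    exact key.trans (hfl.1.trans hlogle)
  · have h2 : Real.exp 2 ≤ maxMod (fF ρ) r := hfl.2.trans hmax
    refine ⟨?_, h2⟩
    have : (2:ℝ) ≤ Real.log ‖fF ρ (n:ℂ)‖ := by
      rw [Real.le_log_iff_exp_le hfpos]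
      exact hfl.2
    linarith



lemma xexp_bound (hρ0 : 0 < ρ) {x : ℝ} (hx : 0 ≤ x) :
    x * Real.exp (-(ρ*x)) ≤ (Real.exp 1 * ρ)⁻¹ := by
  have key : ∀ t : ℝ, 0 ≤ t → t * Real.exp (-t) ≤ (Real.exp 1)⁻¹ := by
    intro t ht
    have h1 : t ≤ Real.exp (t - 1) := by
      have := Real.add_one_le_exp (t - 1)
      linarith
    have h2 : t * Real.exp (-t) ≤ Real.exp (t-1) * Real.exp (-t) :=
      mul_le_mul_of_nonneg_right h1 (Real.exp_pos _).le
    rw [← Real.exp_add] at h2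
    have h3 : t - 1 + -t = -1 := by ring
    rw [h3] at h2
    calc t * Real.exp (-t) ≤ Real.exp (-1) := h2
    _ = (Real.exp 1)⁻¹ := by rw [Real.exp_neg]
  have h := key (ρ*x) (by positivity)
  rw [mul_inv]
  calc x * Real.exp (-(ρ*x)) = ρ * x * Real.exp (-(ρ * x)) / ρ := by field_simp
  _ ≤ (Real.exp 1)⁻¹ / ρ := (div_le_div_iff_of_pos_right hρ0).mpr h
  _ = (Real.exp 1)⁻¹ * ρ⁻¹ := div_eq_mul_inv _ _

/-- Exponent bound in the main head region. -/
noncomputable def B2 (ρ r : ℝ) : ℝ :=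
  (2*r)^ρ * ((ρ/2) * Real.log (2*r))^(-ρ) * (Real.exp 1 * ρ)⁻¹

lemma head_b (hρ0 : 0 < ρ) (hρ1 : ρ < 1) : ∀ᶠ r : ℝ in atTop, ∀ n : ℕ,
    ((2*r)^(ρ/2) ≤ (n:ℝ)) → ((n:ℝ) ≤ r^ρ) → u ρ r n ≤ Real.exp (B2 ρ r) := by
  set q := 1/ρ with hq
  have hq1 : 1 < q := (one_lt_div hρ0).mpr hρ1
  have Ev1 : ∀ᶠ r : ℝ in atTop, (2:ℝ) ≤ (2*r)^(ρ/2) := by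
    have h : Tendsto (fun r : ℝ => (2*r)^(ρ/2)) atTop atTop :=
      (tendsto_rpow_atTop (by linarith)).comp (tendsto_id.const_mul_atTop two_pos)
    exact h.eventually (eventually_ge_atTop 2)
  filter_upwards [Ev1, eventually_ge_atTop 1] with r hE1 hr1
  have hrpos : (0:ℝ) < r := by linarith
  have h2rpos : (0:ℝ) < 2*r := by linarith
  have hlog2r : 0 < Real.log (2*r) := Real.log_pos (by linarith)
  have hhalf : (0:ℝ) < (ρ/2) * Real.log (2*r) := by positivity
  have hB2 : 0 ≤ B2 ρ r := by
    unfold B2; positivity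
  intro n hnlo hnhi
  have hrρ : r^ρ ≤ r := by
    calc r^ρ ≤ r^(1:ℝ) := Real.rpow_le_rpow_of_exponent_le hr1 hρ1.le
    _ = r := Real.rpow_one r
  have hn2' : (2:ℝ) ≤ (n:ℝ) := le_trans hE1 hnlo
  have hn2 : 2 ≤ n := by exact_mod_cast hn2'
  have hnpos : (0:ℝ) < n := by linarith
  have hcc := cc_pos hρ0 hn2
  have hlogn : 0 < Real.log n := Real.log_pos (by linarith)
  have hu : u ρ r n = ((r + n) / cc ρ n) ^ n := by
    rw [u, aR_eq_of_ge hn2, div_pow, one_div, inv_mul_eq_div]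
  have hratio_nonneg : 0 ≤ (r + n) / cc ρ n := by positivity
  have hstep1 : u ρ r n ≤ (2*r / cc ρ n) ^ n := by
    rw [hu]
    apply pow_le_pow_left₀ hratio_nonneg
    apply (div_le_div_iff_of_pos_right hcc).mpr
    linarith
  set base := 2*r/cc ρ n with hbasedef
  have hbasepos : 0 < base := by positivity
  rcases le_or_gt base 1 with hb | hb
  · have h1 : base ^ n ≤ 1 := pow_le_one₀ hbasepos.le hb
    exact hstep1.trans (h1.trans (Real.one_le_exp hB2))
  · set b := Real.log base with hbdef
    have hbpos : 0 < b := Real.log_pos hb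
    have hbase_exp : base ^ n = Real.exp ((n:ℝ) * b) := by
      rw [Real.exp_nat_mul, Real.exp_log hbasepos]
    have hlogcc : Real.log (cc ρ n) = q * Real.log n + Real.log (Real.log n) := by
      rw [show cc ρ n = (n:ℝ)^q * Real.log n from rfl,
        Real.log_mul (by positivity) (ne_of_gt hlogn), Real.log_rpow hnpos]
    have hb_eq : b = Real.log (2*r) - q*Real.log n - Real.log (Real.log n) := by
      rw [hbdef, hbasedef, Real.log_div (ne_of_gt h2rpos) (ne_of_gt hcc), hlogcc]
      ring
    have hlogn_eq : Real.log n = ρ * (Real.log (2*r) - Real.log (Real.log n) - b) := by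
      rw [hb_eq, hq]
      field_simp
      ring
    have e1 : Real.exp (ρ*Real.log (2*r)) = (2*r)^ρ := by
      rw [Real.rpow_def_of_pos h2rpos]
      congr 1
      ring
    have e2 : Real.exp (-(ρ * Real.log (Real.log n))) = (Real.log n)^(-ρ) := by
      rw [Real.rpow_def_of_pos hlogn]
      congr 1
      ring
    have hn_eq : (n:ℝ) = (2*r)^ρ * (Real.log n)^(-ρ) * Real.exp (-(ρ*b)) := by
      rw [← e1, ← e2, ← Real.exp_add, ← Real.exp_add]
      nth_rewrite 1 [show (n:ℝ) = Real.exp (Real.log n) from (Real.exp_log hnpos).symm]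
      congr 1
      nth_rewrite 1 [hlogn_eq]
      ring
    have hfac1 : (Real.log n)^(-ρ) ≤ ((ρ/2) * Real.log (2*r))^(-ρ) := by
      apply Real.rpow_le_rpow_of_nonpos hhalf _ (by linarith)
      calc (ρ/2) * Real.log (2*r) = Real.log ((2*r)^(ρ/2)) :=
        (Real.log_rpow h2rpos _).symm
      _ ≤ Real.log n := Real.log_le_log (Real.rpow_pos_of_pos h2rpos _) hnlo
    have hnb : (n:ℝ) * b ≤ B2 ρ r := by
      rw [hn_eq, B2]
      calc (2*r)^ρ * (Real.log n)^(-ρ) * Real.exp (-(ρ*b)) * b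
          = (2*r)^ρ * ((Real.log n)^(-ρ)) * (b * Real.exp (-(ρ*b))) := by ring
      _ ≤ (2*r)^ρ * (((ρ/2) * Real.log (2*r))^(-ρ)) * ((Real.exp 1 * ρ)⁻¹) := by
          apply mul_le_mul
          · exact mul_le_mul_of_nonneg_left hfac1 (Real.rpow_nonneg h2rpos.le _)
          · exact xexp_bound hρ0 hbpos.le
          · positivity
          · positivity
    calc u ρ r n ≤ base ^ n := hstep1
    _ = Real.exp ((n:ℝ)*b) := hbase_exp
    _ ≤ Real.exp (B2 ρ r) := Real.exp_le_exp.mpr hnb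

lemma tail_bound (hρ0 : 0 < ρ) (hρ1 : ρ < 1) : ∀ᶠ r : ℝ in atTop, ∀ n : ℕ,
    (r^ρ ≤ (n:ℝ)) → u ρ r n ≤ (1/2)^n := by
  set q := 1/ρ with hq
  have hq1 : 1 < q := (one_lt_div hρ0).mpr hρ1
  have Ev1 : ∀ᶠ r : ℝ in atTop, 8 ≤ ρ * Real.log r := by
    have := Real.tendsto_log_atTop.eventually (eventually_ge_atTop (8/ρ))
    filter_upwards [this] with r h
    rw [div_le_iff₀ hρ0] at h
    linarith
  have Ev2 : ∀ᶠ r : ℝ in atTop, (4:ℝ) ≤ r^(1-ρ) :=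
    (tendsto_rpow_atTop (by linarith)).eventually (eventually_ge_atTop 4)
  have Ev3 : ∀ᶠ r : ℝ in atTop, (2:ℝ) ≤ r^ρ :=
    (tendsto_rpow_atTop hρ0).eventually (eventually_ge_atTop 2)
  filter_upwards [Ev1, Ev2, Ev3, eventually_ge_atTop 1] with r e1 e2 e3 hr1
  intro n hn
  have hrpos : (0:ℝ) < r := by linarith
  have hn2' : (2:ℝ) ≤ (n:ℝ) := le_trans e3 hn
  have hn2 : 2 ≤ n := by exact_mod_cast hn2'
  have hnpos : (0:ℝ) < n := by linarith
  have hrρpos : (0:ℝ) < r^ρ := Real.rpow_pos_of_pos hrpos _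
  have hnq : r ≤ (n:ℝ)^q := by
    calc r = r^(ρ*q) := by rw [show ρ*q = 1 by rw [hq]; field_simp, Real.rpow_one]
    _ = (r^ρ)^q := Real.rpow_mul hrpos.le _ _
    _ ≤ (n:ℝ)^q := Real.rpow_le_rpow hrρpos.le hn (by linarith)
  have hlogn : 8 ≤ Real.log n := by
    calc (8:ℝ) ≤ ρ * Real.log r := e1
    _ = Real.log (r^ρ) := (Real.log_rpow hrpos _).symm
    _ ≤ Real.log n := Real.log_le_log hrρpos hn
  have hnq1 : (4:ℝ) ≤ (n:ℝ)^(q-1) := by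
    calc (4:ℝ) ≤ r^(1-ρ) := e2
    _ = (r^ρ)^(q-1) := by
        rw [← Real.rpow_mul hrpos.le]
        congr 1
        rw [hq]; field_simp
    _ ≤ (n:ℝ)^(q-1) := Real.rpow_le_rpow hrρpos.le hn (by linarith)
  have hsplit : (n:ℝ)^q = (n:ℝ) * (n:ℝ)^(q-1) := by
    have h : (n:ℝ)^q = (n:ℝ)^(1+(q-1)) := by norm_num
    rw [h, Real.rpow_add hnpos, Real.rpow_one]
  have hlogn0 : (0:ℝ) ≤ Real.log n := by linarith
  have hcc1 : 8 * r ≤ cc ρ n := by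
    calc 8*r ≤ Real.log n * r := mul_le_mul_of_nonneg_right hlogn hrpos.le
    _ ≤ Real.log n * (n:ℝ)^q := mul_le_mul_of_nonneg_left hnq hlogn0
    _ = cc ρ n := by rw [mul_comm]; rfl
  have hcc2 : 4*(n:ℝ) ≤ cc ρ n := by
    have h1 : (n:ℝ) * 4 ≤ (n:ℝ) * (n:ℝ)^(q-1) := mul_le_mul_of_nonneg_left hnq1 hnpos.le
    have h2 : ((n:ℝ) * (n:ℝ)^(q-1)) * 1 ≤ ((n:ℝ)*(n:ℝ)^(q-1)) * Real.log n := by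
      apply mul_le_mul_of_nonneg_left (by linarith) (by positivity)
    calc 4*(n:ℝ) = ((n:ℝ) * 4) * 1 := by ring
    _ ≤ ((n:ℝ) * (n:ℝ)^(q-1)) * 1 := by linarith
    _ ≤ ((n:ℝ)*(n:ℝ)^(q-1)) * Real.log n := h2
    _ = cc ρ n := by rw [← hsplit]; rfl
  have hcc_pos : 0 < cc ρ n := cc_pos hρ0 hn2
  have hu : u ρ r n = ((r + n) / cc ρ n) ^ n := by
    rw [u, aR_eq_of_ge hn2, div_pow, one_div, inv_mul_eq_div]
  rw [hu]
  apply pow_le_pow_left₀ (by positivity)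
  rw [div_le_iff₀ hcc_pos]
  linarith

/-- Exponent bound for small n. -/
noncomputable def B1 (ρ r : ℝ) : ℝ := (2*r)^(ρ/2) * Real.log (3*r/Real.log 2)

lemma small_bound (hρ0 : 0 < ρ) (hρ1 : ρ < 1) : ∀ᶠ r : ℝ in atTop, ∀ n : ℕ,
    2 ≤ n → ((n:ℝ) ≤ (2*r)^(ρ/2)) → u ρ r n ≤ Real.exp (B1 ρ r) := by
  have Ev1 : ∀ᶠ r : ℝ in atTop, (2*r)^(ρ/2) ≤ r := by
    filter_upwards [eventually_ge_atTop 2] with r hr2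
    have hrpos : (0:ℝ) < r := by linarith
    calc (2*r)^(ρ/2) ≤ (2*r)^((1:ℝ)/2) := by
          apply Real.rpow_le_rpow_of_exponent_le (by linarith) (by linarith)
    _ ≤ (r^(2:ℝ))^((1:ℝ)/2) := by
          apply Real.rpow_le_rpow (by linarith) _ (by norm_num)
          have h2 : r^(2:ℝ) = r * r := by
            rw [show (2:ℝ) = ((2:ℕ):ℝ) by norm_num, Real.rpow_natCast]
            ring
          rw [h2]
          nlinarith
    _ = r := by
          rw [← Real.rpow_mul hrpos.le]
          norm_num
  filter_upwards [Ev1, eventually_ge_atTop 1] with r e1 hr1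
  intro n hn2 hnle
  have hrpos : (0:ℝ) < r := by linarith
  have hlog2 : (0:ℝ) < Real.log 2 := Real.log_pos (by norm_num)
  have hbase1 : (1:ℝ) ≤ 3*r/Real.log 2 := by
    rw [le_div_iff₀ hlog2]
    have := Real.log_two_lt_d9
    linarith
  have hbasepos : (0:ℝ) < 3*r/Real.log 2 := by linarith
  have hn2' : (2:ℝ) ≤ (n:ℝ) := by exact_mod_cast hn2
  have hnpos : (0:ℝ) < n := by linarith
  have hcc_pos : 0 < cc ρ n := cc_pos hρ0 hn2
  have hcclog2 : Real.log 2 ≤ cc ρ n := by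
    have h1 : (1:ℝ) ≤ (n:ℝ)^(1/ρ) := Real.one_le_rpow (by linarith) (by positivity)
    have h2 : Real.log 2 ≤ Real.log n := Real.log_le_log (by norm_num) hn2'
    calc Real.log 2 = 1 * Real.log 2 := (one_mul _).symm
    _ ≤ (n:ℝ)^(1/ρ) * Real.log n :=
        mul_le_mul h1 h2 hlog2.le (by positivity)
  have hu : u ρ r n = ((r + n) / cc ρ n) ^ n := by
    rw [u, aR_eq_of_ge hn2, div_pow, one_div, inv_mul_eq_div]
  have hratio : (r + n) / cc ρ n ≤ 3*r/Real.log 2 := by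
    apply div_le_div₀ (by linarith) _ hlog2 hcclog2
    have : (n:ℝ) ≤ r := hnle.trans e1
    linarith
  have hstep : u ρ r n ≤ (3*r/Real.log 2) ^ n := by
    rw [hu]
    exact pow_le_pow_left₀ (by positivity) hratio n
  have hstep2 : ((3:ℝ)*r/Real.log 2) ^ n ≤ Real.exp (B1 ρ r) := by
    have h1 : ((3:ℝ)*r/Real.log 2) ^ n = (3*r/Real.log 2) ^ ((n:ℕ):ℝ) :=
      (Real.rpow_natCast _ n).symm
    rw [h1]
    have h2 : (3*r/Real.log 2) ^ ((n:ℕ):ℝ) ≤ (3*r/Real.log 2) ^ ((2*r)^(ρ/2)) :=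
      Real.rpow_le_rpow_of_exponent_le hbase1 hnle
    refine h2.trans ?_
    rw [Real.rpow_def_of_pos hbasepos, B1]
    apply le_of_eq
    congr 1
    ring
  exact hstep.trans hstep2

noncomputable def UB (ρ r : ℝ) : ℝ := B1 ρ r + B2 ρ r + (Real.log 4 + ρ * Real.log r)

lemma upper_real (hρ0 : 0 < ρ) (hρ1 : ρ < 1) : ∀ᶠ r : ℝ in atTop,
    Real.log (maxMod (fF ρ) r) ≤ UB ρ r := by
  have EvB1 : ∀ᶠ r : ℝ in atTop, 0 ≤ B1 ρ r := by
    filter_upwards [eventually_ge_atTop 1] with r hr1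
    have hlog2 : (0:ℝ) < Real.log 2 := Real.log_pos (by norm_num)
    have h1 : (1:ℝ) ≤ 3*r/Real.log 2 := by
      rw [le_div_iff₀ hlog2]
      have := Real.log_two_lt_d9
      linarith
    apply mul_nonneg (Real.rpow_nonneg (by linarith) _) (Real.log_nonneg h1)
  have EvB2 : ∀ᶠ r : ℝ in atTop, 0 ≤ B2 ρ r := by
    filter_upwards [eventually_ge_atTop 1] with r hr1
    have hlog2r : 0 < Real.log (2*r) := Real.log_pos (by linarith)
    unfold B2
    positivity
  filter_upwards [head_b hρ0 hρ1, tail_bound hρ0 hρ1, small_bound hρ0 hρ1,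
    lower_real hρ0 hρ1, EvB1, EvB2, eventually_ge_atTop 1] with r hhead htail hsmall hlow hB1 hB2 hr1
  have hrpos : (0:ℝ) < r := by linarith
  have hrρ1 : (1:ℝ) ≤ r^ρ := Real.one_le_rpow hr1 hρ0.le
  set T := ⌈r^ρ⌉₊ with hTdef
  set E := Real.exp (B1 ρ r + B2 ρ r) with hEdef
  have hE1 : (1:ℝ) ≤ E := Real.one_le_exp (by linarith)
  have hsummable := summable_u hρ0 hρ1 (le_of_lt hrpos)
  -- maxMod ≤ tsum u
  have hM : maxMod (fF ρ) r ≤ ∑' n, u ρ r n := by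
    apply maxMod_le (tsum_nonneg (u_nonneg hρ0 hrpos.le))
    intro z hz
    calc ‖fF ρ z‖ ≤ ∑' n, ‖(aR ρ n : ℂ) * ff z n‖ :=
        norm_tsum_le_tsum_norm (summable_norm_term hρ0 hρ1 z)
    _ ≤ ∑' n, u ρ r n :=
        Summable.tsum_le_tsum (fun n => norm_term_le hρ0 hz n)
          (summable_norm_term hρ0 hρ1 z) hsummable
  -- split the sum
  have hsplit : ∑' n, u ρ r n =
      ∑ n ∈ Finset.range T, u ρ r n + ∑' n, u ρ r (n + T) :=
    (Summable.sum_add_tsum_nat_add T hsummable).symm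
  -- head
  have hhead_sum : ∑ n ∈ Finset.range T, u ρ r n ≤ (T:ℝ) * E := by
    have hbound : ∀ n ∈ Finset.range T, u ρ r n ≤ E := by
      intro n hnT
      have hnlt : (n:ℝ) < r^ρ := by
        have := Finset.mem_range.mp hnT
        exact_mod_cast Nat.lt_ceil.mp this
      rcases Nat.lt_or_ge n 2 with h2 | h2
      · have : u ρ r n = 0 := by
          rw [u, aR]
          simp [h2]
        rw [this]; linarith
      · rcases le_or_gt ((n:ℝ)) ((2*r)^(ρ/2)) with hcase | hcase
        · calc u ρ r n ≤ Real.exp (B1 ρ r) := hsmall n h2 hcase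
          _ ≤ E := Real.exp_le_exp.mpr (by linarith)
        · calc u ρ r n ≤ Real.exp (B2 ρ r) := hhead n hcase.le hnlt.le
          _ ≤ E := Real.exp_le_exp.mpr (by linarith)
    calc ∑ n ∈ Finset.range T, u ρ r n ≤ (Finset.range T).card • E :=
      Finset.sum_le_card_nsmul _ _ _ hbound
    _ = (T:ℝ) * E := by rw [Finset.card_range, nsmul_eq_mul]
  -- tail
  have htail_sum : ∑' n, u ρ r (n + T) ≤ 2 := by
    have hs1 : Summable (fun n => u ρ r (n + T)) := (summable_nat_add_iff T).mpr hsummable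
    have hs2 : Summable (fun n : ℕ => ((1:ℝ)/2)^n) :=
      summable_geometric_of_lt_one (by norm_num) (by norm_num)
    have hle : ∀ n : ℕ, u ρ r (n + T) ≤ ((1:ℝ)/2)^n := by
      intro n
      have h1 : r^ρ ≤ ((n+T : ℕ):ℝ) := by
        have := Nat.le_ceil (r^ρ)
        push_cast
        push_cast at this
        linarith
      calc u ρ r (n + T) ≤ ((1:ℝ)/2)^(n+T) := htail (n+T) h1
      _ ≤ ((1:ℝ)/2)^n := by
          apply pow_le_pow_of_le_one (by norm_num) (by norm_num)
          omega
    calc ∑' n, u ρ r (n + T) ≤ ∑' n : ℕ, ((1:ℝ)/2)^n := Summable.tsum_le_tsum hle hs1 hs2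
    _ = 2 := by
        rw [tsum_geometric_of_lt_one (by norm_num) (by norm_num)]
        norm_num
  -- combine
  have hMbound : maxMod (fF ρ) r ≤ ((T:ℝ) + 2) * E := by
    calc maxMod (fF ρ) r ≤ ∑' n, u ρ r n := hM
    _ = ∑ n ∈ Finset.range T, u ρ r n + ∑' n, u ρ r (n + T) := hsplit
    _ ≤ (T:ℝ) * E + 2 := by linarith
    _ ≤ ((T:ℝ) + 2) * E := by nlinarith
  have hMpos : 0 < maxMod (fF ρ) r := lt_of_lt_of_le (Real.exp_pos 2) hlow.2.2
  have hT4 : ((T:ℝ) + 2) ≤ 4 * r^ρ := by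
    have h1 : (T:ℝ) < r^ρ + 1 := Nat.ceil_lt_add_one (by linarith)
    linarith
  calc Real.log (maxMod (fF ρ) r) ≤ Real.log (((T:ℝ) + 2) * E) :=
      Real.log_le_log hMpos hMbound
  _ = Real.log ((T:ℝ) + 2) + (B1 ρ r + B2 ρ r) := by
      rw [Real.log_mul (by positivity) (by positivity), hEdef, Real.log_exp]
  _ ≤ Real.log (4 * r^ρ) + (B1 ρ r + B2 ρ r) := by
      have := Real.log_le_log (by positivity : (0:ℝ) < (T:ℝ)+2) hT4
      linarith
  _ ≤ UB ρ r := by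
      rw [Real.log_mul (by norm_num) (by positivity), Real.log_rpow hrpos, UB]
      linarith



lemma log_div_rpow_tendsto {s : ℝ} (hs : 0 < s) :
    Tendsto (fun r : ℝ => Real.log r / r^s) atTop (𝓝 0) :=
  (isLittleO_log_rpow_atTop hs).tendsto_div_nhds_zero

lemma UB_div_tendsto (hρ0 : 0 < ρ) (hρ1 : ρ < 1) :
    Tendsto (fun r => UB ρ r / r^ρ) atTop (𝓝 0) := by
  have hhalf : (0:ℝ) < ρ/2 := by linarith
  set C := Real.log (3/Real.log 2) with hC
  set g := fun r : ℝ => (2:ℝ)^(ρ/2) * (C * r^(-(ρ/2)) + Real.log r / r^(ρ/2))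
    + (2:ℝ)^ρ * (((ρ/2) * Real.log (2*r))^(-ρ)) * (Real.exp 1 * ρ)⁻¹
    + (Real.log 4 * r^(-ρ) + ρ * (Real.log r / r^ρ)) with hg
  have hgt : Tendsto g atTop (𝓝 0) := by
    have t1a : Tendsto (fun r : ℝ => C * r^(-(ρ/2))) atTop (𝓝 0) := by
      simpa using (tendsto_rpow_neg_atTop hhalf).const_mul C
    have t1 : Tendsto (fun r : ℝ => (2:ℝ)^(ρ/2) * (C * r^(-(ρ/2)) + Real.log r / r^(ρ/2)))
        atTop (𝓝 0) := by
      simpa using (t1a.add (log_div_rpow_tendsto hhalf)).const_mul ((2:ℝ)^(ρ/2))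
    have hcomp : Tendsto (fun r : ℝ => (ρ/2) * Real.log (2*r)) atTop atTop := by
      apply Tendsto.const_mul_atTop hhalf
      exact Real.tendsto_log_atTop.comp (tendsto_id.const_mul_atTop two_pos)
    have t2 : Tendsto (fun r : ℝ =>
        (2:ℝ)^ρ * (((ρ/2) * Real.log (2*r))^(-ρ)) * (Real.exp 1 * ρ)⁻¹) atTop (𝓝 0) := by
      have h := (tendsto_rpow_neg_atTop hρ0).comp hcomp
      simpa using (h.const_mul ((2:ℝ)^ρ)).mul_const ((Real.exp 1 * ρ)⁻¹)
    have t3a : Tendsto (fun r : ℝ => Real.log 4 * r^(-ρ)) atTop (𝓝 0) := by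
      simpa using (tendsto_rpow_neg_atTop hρ0).const_mul (Real.log 4)
    have t3 : Tendsto (fun r : ℝ => Real.log 4 * r^(-ρ) + ρ * (Real.log r / r^ρ))
        atTop (𝓝 0) := by
      simpa using t3a.add ((log_div_rpow_tendsto hρ0).const_mul ρ)
    rw [hg]
    have h0 := (t1.add t2).add t3
    simpa using h0
  apply hgt.congr'
  filter_upwards [eventually_gt_atTop 1] with r hr1
  have hrpos : (0:ℝ) < r := by linarith
  have hlog2 : (0:ℝ) < Real.log 2 := Real.log_pos (by norm_num)
  have hrρ : (0:ℝ) < r^ρ := Real.rpow_pos_of_pos hrpos _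
  have hrhalf : (0:ℝ) < r^(ρ/2) := Real.rpow_pos_of_pos hrpos _
  have hX2 : r^ρ = r^(ρ/2) * r^(ρ/2) := by
    rw [← Real.rpow_add hrpos]
    norm_num
  have hXneg : r^(-(ρ/2)) = (r^(ρ/2))⁻¹ := Real.rpow_neg hrpos.le _
  have hρneg : r^(-ρ) = (r^ρ)⁻¹ := Real.rpow_neg hrpos.le _
  have h1 : (2*r)^(ρ/2) = 2^(ρ/2) * r^(ρ/2) := Real.mul_rpow (by norm_num) hrpos.le
  have h1' : (2*r)^ρ = 2^ρ * r^ρ := Real.mul_rpow (by norm_num) hrpos.le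
  have h2 : Real.log (3*r/Real.log 2) = C + Real.log r := by
    rw [hC, show 3*r/Real.log 2 = (3/Real.log 2) * r by ring,
      Real.log_mul (by positivity) (ne_of_gt hrpos)]
  simp only [hg, UB, B1, B2]
  rw [h1, h1', h2, hXneg, hρneg, hX2]
  have hne : r^(ρ/2) ≠ 0 := ne_of_gt hrhalf
  field_simp

lemma type_tendsto (hρ0 : 0 < ρ) (hρ1 : ρ < 1) :
    Tendsto (fun r => Real.log (maxMod (fF ρ) r) / r^ρ) atTop (𝓝 0) := by
  apply tendsto_of_tendsto_of_tendsto_of_le_of_le' tendsto_const_nhds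
    (UB_div_tendsto hρ0 hρ1)
  · filter_upwards [lower_real hρ0 hρ1, eventually_ge_atTop 1] with r hlow hr1
    have h1 : (0:ℝ) ≤ Real.log (maxMod (fF ρ) r) := by linarith [hlow.2.1]
    positivity
  · filter_upwards [upper_real hρ0 hρ1, eventually_ge_atTop 1] with r hup hr1
    have hrρ : (0:ℝ) < r^ρ := Real.rpow_pos_of_pos (by linarith) _
    exact (div_le_div_iff_of_pos_right hrρ).mpr hup

lemma order_tendsto (hρ0 : 0 < ρ) (hρ1 : ρ < 1) :
    Tendsto (fun r => Real.log (Real.log (maxMod (fF ρ) r)) / Real.log r)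
      atTop (𝓝 ρ) := by
  have hll : Tendsto (fun r : ℝ => Real.log (Real.log r) / Real.log r) atTop (𝓝 0) := by
    have h2 : Tendsto (fun y : ℝ => Real.log y / y) atTop (𝓝 0) := by
      apply (log_div_rpow_tendsto one_pos).congr'
      filter_upwards [eventually_gt_atTop 0] with y hy
      rw [Real.rpow_one]
    exact h2.comp Real.tendsto_log_atTop
  have hlo : Tendsto (fun r : ℝ =>
      ρ - (Real.log 2 + 2*ρ * Real.log (Real.log r)) / Real.log r) atTop (𝓝 ρ) := by
    have t1 : Tendsto (fun r:ℝ => Real.log 2 / Real.log r) atTop (𝓝 0) :=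
      tendsto_const_nhds.div_atTop Real.tendsto_log_atTop
    have t2 : Tendsto (fun r:ℝ => 2*ρ * (Real.log (Real.log r) / Real.log r))
        atTop (𝓝 0) := by simpa using hll.const_mul (2*ρ)
    have t3 := (tendsto_const_nhds (x := ρ) (f := atTop (α := ℝ))).sub (t1.add t2)
    simp only [add_zero, sub_zero] at t3
    apply t3.congr'
    filter_upwards with r
    rw [add_div, mul_div_assoc]
  apply tendsto_of_tendsto_of_tendsto_of_le_of_le' hlo tendsto_const_nhds
  · -- lower bound
    filter_upwards [lower_real hρ0 hρ1, eventually_gt_atTop 2] with r hlow hr2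
    have hrpos : (0:ℝ) < r := by linarith
    have hlogr : (0:ℝ) < Real.log r := Real.log_pos (by linarith)
    have hlogM2 : (2:ℝ) ≤ Real.log (maxMod (fF ρ) r) := hlow.2.1
    have hLopos : (0:ℝ) < r^ρ / (2 * Real.log r ^ (2*ρ)) := by positivity
    have hlogLo : Real.log (r^ρ / (2 * Real.log r ^ (2*ρ)))
        = ρ * Real.log r - (Real.log 2 + 2*ρ * Real.log (Real.log r)) := by
      rw [Real.log_div (by positivity) (by positivity),
        Real.log_rpow hrpos,
        Real.log_mul (by norm_num) (by positivity),
        Real.log_rpow hlogr]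
    have hmono : Real.log (r^ρ / (2 * Real.log r ^ (2*ρ)))
        ≤ Real.log (Real.log (maxMod (fF ρ) r)) :=
      Real.log_le_log hLopos hlow.1
    rw [hlogLo] at hmono
    have hρeq : ρ * Real.log r / Real.log r = ρ := by
      field_simp
    calc ρ - (Real.log 2 + 2*ρ * Real.log (Real.log r)) / Real.log r
        = (ρ * Real.log r - (Real.log 2 + 2*ρ * Real.log (Real.log r))) / Real.log r := by
          rw [sub_div, hρeq]
    _ ≤ Real.log (Real.log (maxMod (fF ρ) r)) / Real.log r :=
        (div_le_div_iff_of_pos_right hlogr).mpr hmono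
  · -- upper bound
    have hUB1 : ∀ᶠ r : ℝ in atTop, UB ρ r / r^ρ ≤ 1 :=
      (UB_div_tendsto hρ0 hρ1).eventually (ge_mem_nhds zero_lt_one)
    filter_upwards [upper_real hρ0 hρ1, lower_real hρ0 hρ1, hUB1,
      eventually_gt_atTop 2] with r hup hlow hUB hr2
    have hrpos : (0:ℝ) < r := by linarith
    have hlogr : (0:ℝ) < Real.log r := Real.log_pos (by linarith)
    have hrρ : (0:ℝ) < r^ρ := Real.rpow_pos_of_pos hrpos _
    have hUBr : UB ρ r ≤ r^ρ := by
      rw [div_le_one hrρ] at hUB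
      exact hUB
    have hlogM2 : (2:ℝ) ≤ Real.log (maxMod (fF ρ) r) := hlow.2.1
    have h1 : Real.log (Real.log (maxMod (fF ρ) r)) ≤ Real.log (r^ρ) :=
      Real.log_le_log (by linarith) (hup.trans hUBr)
    rw [Real.log_rpow hrpos] at h1
    rw [div_le_iff₀ hlogr]
    exact h1


end MinType

theorem example_minimum_type (ρ : ℝ) (hρ0 : 0 < ρ) (hρ1 : ρ < 1)
    (a : ℕ → ℂ)
    (ha : ∀ n : ℕ, a n = if n < 2 then 0 else
      (((1 / ((n : ℝ) ^ (1 / ρ) * Real.log n) ^ n : ℝ)) : ℂ)) :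
    ∃ f : ℂ → ℂ, Differentiable ℂ f ∧
      (∀ K : Set ℂ, IsCompact K →
        TendstoUniformlyOn (fun N z => ∑ n ∈ Finset.range N, a n * ff z n) f
          Filter.atTop K) ∧
      growthOrder f = ρ ∧ growthTypeE f ρ = (0 : EReal) := by
  have haR : a = fun n => ((MinType.aR ρ n : ℝ) : ℂ) := by
    funext n
    rw [ha n]
    by_cases h : n < 2
    · simp [MinType.aR, h]
    · simp [MinType.aR, h]
  refine ⟨MinType.fF ρ, MinType.fF_differentiable hρ0 hρ1, ?_, ?_, ?_⟩
  · intro K hK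
    rw [haR]
    exact MinType.tuo_compact hρ0 hρ1 hK
  · rw [growthOrder]
    exact (MinType.order_tendsto hρ0 hρ1).limsup_eq
  · rw [growthTypeE]
    have h := MinType.type_tendsto hρ0 hρ1
    have h2 : Filter.Tendsto
        (fun r : ℝ => ((Real.log (maxMod (MinType.fF ρ) r) / r ^ ρ : ℝ) : EReal))
        Filter.atTop (nhds (((0:ℝ) : EReal))) := EReal.tendsto_coe.mpr h
    rw [EReal.coe_zero] at h2
    exact h2.limsup_eq
end

section
/- Let p and q be relatively prime positive integers with q < p, let σ > 0 be real, set λ = q/p, and let A_1, …, A_p be the unique complex constants such that Σ_{j=1}^{p} A_j·n^{\underline{j}} = (1/σ^p)·(n/λ)^{\underline{p}} for all n ∈ ℂ. Then the entire function f(z) = Σ_{t=0}^∞ (σ^{pt}/(pt)!) · z^{\underline{qt}} satisfies the linear difference equation A_p·z^{\underline{p}}·Δ^p f(z−p) + ⋯ + A_1·z·Δf(z−1) − z^{\underline{q}}·f(z−q) = 0 for all z ∈ ℂ. -/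
open Finset

/-- The difference operator `Δf(z) = f(z+1) - f(z)`. -/
noncomputable def Δ (f : ℂ → ℂ) : ℂ → ℂ := fun z => f (z + 1) - f z

/-!
Write `c t = σ^(pt)/(pt)!` and `n↓j` for `n.descFactorial j`. Since `Δ (ff · n) = n · ff · (n - 1)`,
differencing the series termwise gives `Δ^j f (z - j) = ∑ₜ c t · (qt)↓j · ff (z - j) (qt - j)`, and
`ff z j · ff (z - j) (qt - j) = ff z (qt)`. Evaluating the defining identity of the `A j` at `n = qt`
turns `∑ⱼ A j · (qt)↓j` into `σ^(-p) · (pt)↓p`, so the `t`-th term of the left-hand sum is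
`σ^(-p) · (pt)↓p · c t · ff z (qt)`. It vanishes for `t = 0` and equals `c (t - 1) · ff z (qt)`
otherwise, which is the `(t - 1)`-th term of `ff z q · f (z - q)`.
-/

lemma ff_eq_eval_descPochhammer (z : ℂ) (n : ℕ) : ff z n = (descPochhammer ℂ n).eval z :=
  (descPochhammer_eval_eq_prod_range n z).symm

lemma ff_add (z : ℂ) (a b : ℕ) : ff z (a + b) = ff z a * ff (z - a) b := by
  simp only [ff_eq_eval_descPochhammer, ← descPochhammer_mul, Polynomial.eval_mul,
    Polynomial.eval_comp, Polynomial.eval_sub, Polynomial.eval_X, Polynomial.eval_natCast]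

lemma ff_succ (z : ℂ) (n : ℕ) : ff z (n + 1) = ff z n * (z - n) :=
  prod_range_succ _ _

lemma ff_natCast (n j : ℕ) : ff (n : ℂ) j = n.descFactorial j := by
  rw [ff_eq_eval_descPochhammer, descPochhammer_eval_eq_descFactorial]

lemma descFactorial_mul_ff_mul_ff_sub (z : ℂ) (n j : ℕ) :
    n.descFactorial j * (ff z j * ff (z - j) (n - j)) = n.descFactorial j * ff z n := by
  rcases le_or_gt j n with h | h
  · rw [← ff_add, Nat.add_sub_cancel' h]
  · simp [Nat.descFactorial_eq_zero_iff_lt.mpr h]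

lemma Δ_const_mul_ff (c : ℂ) (n : ℕ) :
    Δ (fun w => c * ff w n) = fun z => c * n * ff z (n - 1) := by
  funext z
  cases n with
  | zero => simp [Δ, ff]
  | succ m =>
    have h_add_one : ff (z + 1) (m + 1) = (z + 1) * ff z m := by
      simp only [ff, prod_range_succ', Nat.cast_add, Nat.cast_one, Nat.cast_zero, sub_zero,
        add_sub_add_right_eq_sub, mul_comm]
    rw [Δ, h_add_one, ff_succ, Nat.add_sub_cancel]
    push_cast
    ring

lemma iterate_Δ_const_mul_ff (j : ℕ) (c : ℂ) (n : ℕ) :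
    Δ^[j] (fun w => c * ff w n) = fun z => c * n.descFactorial j * ff z (n - j) := by
  induction j generalizing c n with
  | zero => simp
  | succ j ih =>
    rw [Function.iterate_succ_apply, Δ_const_mul_ff, ih]
    funext z
    cases n with
    | zero => simp
    | succ m =>
      rw [Nat.succ_descFactorial_succ, Nat.add_sub_cancel, Nat.add_sub_add_right]
      push_cast
      ring

lemma hasSum_iterate_Δ {ι : Type*} {g : ι → ℂ → ℂ} {f : ℂ → ℂ}
    (h : ∀ w, HasSum (fun i => g i w) (f w)) (j : ℕ) (w : ℂ) :
    HasSum (fun i => (Δ^[j] (g i)) w) ((Δ^[j] f) w) := by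
  induction j generalizing w with
  | zero => exact h w
  | succ j ih =>
    simp only [Function.iterate_succ_apply', Δ]
    exact (ih (w + 1)).sub (ih w)

lemma sum_mul_descFactorial_of_forall_sum_mul_ff {p q : ℕ} (hq : q ≠ 0) {A : ℕ → ℂ} {a : ℂ}
    (hA : ∀ n : ℂ, ∑ j ∈ Icc 1 p, A j * ff n j =
      a * ∏ k ∈ range p, (n / ((q : ℂ) / (p : ℂ)) - (k : ℂ))) (t : ℕ) :
    ∑ j ∈ Icc 1 p, A j * (q * t).descFactorial j = a * (p * t).descFactorial p := by
  have hpt : ((q * t : ℕ) : ℂ) / ((q : ℂ) / (p : ℂ)) = ((p * t : ℕ) : ℂ) := by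
    have : (q : ℂ) ≠ 0 := Nat.cast_ne_zero.mpr hq
    push_cast
    field_simp
  simp only [← ff_natCast, ← hpt]
  exact hA _

lemma sum_mul_ff_mul_iterate_Δ_const_mul_ff {p q : ℕ} (hq : q ≠ 0) {A : ℕ → ℂ} {a : ℂ}
    (hA : ∀ n : ℂ, ∑ j ∈ Icc 1 p, A j * ff n j =
      a * ∏ k ∈ range p, (n / ((q : ℂ) / (p : ℂ)) - (k : ℂ))) (z c : ℂ) (t : ℕ) :
    ∑ j ∈ Icc 1 p, A j * ff z j * (Δ^[j] fun w => c * ff w (q * t)) (z - j) =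
      a * (p * t).descFactorial p * c * ff z (q * t) :=
  calc _ = ∑ j ∈ Icc 1 p, A j * (q * t).descFactorial j * (c * ff z (q * t)) := by
        refine sum_congr rfl fun j _ => ?_
        rw [iterate_Δ_const_mul_ff]
        linear_combination (A j * c) * descFactorial_mul_ff_mul_ff_sub z (q * t) j
    _ = _ := by
        rw [← sum_mul, sum_mul_descFactorial_of_forall_sum_mul_ff hq hA t]
        ring

lemma one_div_pow_mul_descFactorial_mul_pow_div_factorial {K : Type*} [Field K] [CharZero K]
    {s : K} (hs : s ≠ 0) (p t : ℕ) :
    1 / s ^ p * (p * (t + 1)).descFactorial p * (s ^ (p * (t + 1)) / (p * (t + 1)).factorial) =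
      s ^ (p * t) / (p * t).factorial := by
  have hfac : ((p * t).factorial : K) * (p * t + p).descFactorial p = (p * t + p).factorial := by
    exact_mod_cast Nat.add_sub_cancel (p * t) p ▸ Nat.factorial_mul_descFactorial (by omega)
  rw [mul_add_one, pow_add, ← hfac]
  field_simp

theorem constructed_series_solves_equation_general
    (p q : ℕ) (hq : 0 < q) (hqp : q < p)
    (σ : ℝ) (hσ : 0 < σ)
    (A : ℕ → ℂ)
    (hA : ∀ n : ℂ, ∑ j ∈ Finset.Icc 1 p, A j * ff n j =
      (1 / (σ : ℂ) ^ p) * ∏ k ∈ Finset.range p, (n / ((q : ℂ) / (p : ℂ)) - (k : ℂ)))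
    (f : ℂ → ℂ)
    (hf : ∀ z : ℂ, HasSum
      (fun t => ((σ ^ (p * t) / (Nat.factorial (p * t)) : ℝ) : ℂ) * ff z (q * t)) (f z)) :
    ∀ z : ℂ,
      (∑ j ∈ Finset.Icc 1 p, A j * ff z j * (Δ^[j] f) (z - (j : ℂ))) -
        ff z q * f (z - (q : ℂ)) = 0 := by
  intro z
  set c : ℕ → ℂ := fun t => ((σ ^ (p * t) / (Nat.factorial (p * t)) : ℝ) : ℂ)
  set u : ℕ → ℂ := fun t => 1 / (σ : ℂ) ^ p * (p * t).descFactorial p * c t * ff z (q * t)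
  have h_lhs : HasSum u (∑ j ∈ Icc 1 p, A j * ff z j * (Δ^[j] f) (z - j)) :=
    (funext fun t => sum_mul_ff_mul_iterate_Δ_const_mul_ff hq.ne' hA z (c t) t : _ = u) ▸
      hasSum_sum fun j _ => (hasSum_iterate_Δ hf j (z - j)).mul_left (A j * ff z j)
  have h_u_zero : u 0 = 0 := by
    simp [u, Nat.descFactorial_eq_zero_iff_lt.mpr (hq.trans hqp)]
  have h_u_succ : ∀ t, u (t + 1) = ff z q * (c t * ff (z - q) (q * t)) := by
    intro t
    have hσ0 : (σ : ℂ) ≠ 0 := Complex.ofReal_ne_zero.mpr hσ.ne'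
    have hc : 1 / (σ : ℂ) ^ p * (p * (t + 1)).descFactorial p * c (t + 1) = c t := by
      simpa only [c, Complex.ofReal_div, Complex.ofReal_pow, Complex.ofReal_natCast] using
        one_div_pow_mul_descFactorial_mul_pow_div_factorial hσ0 p t
    simp only [u]
    rw [hc, show q * (t + 1) = q + q * t by ring, ff_add]
    ring
  have h_rhs : HasSum (fun t => u (t + 1)) (ff z q * f (z - q)) := by
    simpa only [h_u_succ] using (hf (z - q)).mul_left (ff z q)
  rw [h_lhs.unique (by simpa only [h_u_zero, zero_add] using h_rhs.zero_add), sub_self]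

theorem constructed_series_solves_equation
    (p q : ℕ) (hq : 0 < q) (hqp : q < p) (hcop : Nat.Coprime p q)
    (σ : ℝ) (hσ : 0 < σ)
    (A : ℕ → ℂ)
    (hA : ∀ n : ℂ, ∑ j ∈ Finset.Icc 1 p, A j * ff n j =
      (1 / (σ : ℂ) ^ p) * ∏ k ∈ Finset.range p, (n / ((q : ℂ) / (p : ℂ)) - (k : ℂ)))
    (f : ℂ → ℂ)
    (hf : ∀ z : ℂ, HasSum
      (fun t => ((σ ^ (p * t) / (Nat.factorial (p * t)) : ℝ) : ℂ) * ff z (q * t)) (f z)) :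
    ∀ z : ℂ,
      (∑ j ∈ Finset.Icc 1 p, A j * ff z j * (Δ^[j] f) (z - (j : ℂ))) -
        ff z q * f (z - (q : ℂ)) = 0 :=
  constructed_series_solves_equation_general p q hq hqp σ hσ A hA f hf
end
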